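/- Let A be an associative unital ℚ-algebra which is a division ring with center equal to ℚ and of dimension 9 over ℚ, and let p ≥ 5 be a prime number. Then every nonzero element x ∈ A with x^p lying in the image of the structure map ℚ → A itself lies in the image of ℚ → A. (Equivalently, the group Aˣ/ℚˣ contains no element of order p, i.e., the automorphism group of a non-trivial Severi–Brauer surface over ℚ contains no element of prime order p ≥ 5.) -/

import Mathlib

/-!
Put `n = [ℚ(x) : ℚ]`, which divides `[A : ℚ] = 9`. If `x ^ p = c ∈ ℚ`, taking norms from `ℚ(x)`
gives `N(x) ^ p = c ^ n`, and since `p ∤ n` this makes `c = d ^ p` for some `d ∈ ℚ`. Then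
`y = x / d` satisfies `y ^ p = 1`, so `y = 1` or `y` is a root of the cyclotomic polynomial `Φ_p`;
the latter is impossible because `Φ_p` is irreducible of degree `p - 1 ∤ 9`.
-/

open Polynomial Module

theorem finrank_dvd_finrank_of_algHom {K L A : Type*} [Field K] [DivisionRing L] [Algebra K L]
    [Ring A] [Algebra K A] (φ : L →ₐ[K] A) : finrank K L ∣ finrank K A := by
  let _ : Module L A := Module.compHom A φ.toRingHom
  have : IsScalarTower K L A := ⟨fun q l a => by
    change φ (q • l) * a = q • (φ l * a)
    rw [map_smul, smul_mul_assoc]⟩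
  exact ⟨finrank L A, (finrank_mul_finrank K L A).symm⟩

section DivisionAlgebra

variable {K A : Type*} [Field K] [DivisionRing A] [Algebra K A] [FiniteDimensional K A]

instance fact_irreducible_minpoly (z : A) : Fact (Irreducible (minpoly K z)) :=
  ⟨minpoly.irreducible (IsIntegral.of_finite K z)⟩

variable (K) in
noncomputable def adjoinRootMinpolyHom (z : A) : AdjoinRoot (minpoly K z) →ₐ[K] A :=
  Ideal.Quotient.liftₐ _ (aeval z) fun q hq => by
    obtain ⟨r, rfl⟩ := Ideal.mem_span_singleton'.mp hq
    simp

@[simp]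
theorem adjoinRootMinpolyHom_root (z : A) :
    adjoinRootMinpolyHom K z (AdjoinRoot.root (minpoly K z)) = z :=
  aeval_X z

variable (K) in
theorem finrank_adjoinRoot_minpoly (z : A) :
    finrank K (AdjoinRoot (minpoly K z)) = (minpoly K z).natDegree :=
  finrank_quotient_span_eq_natDegree

variable (K) in
theorem natDegree_minpoly_dvd_finrank (z : A) : (minpoly K z).natDegree ∣ finrank K A :=
  finrank_adjoinRoot_minpoly K z ▸ finrank_dvd_finrank_of_algHom (adjoinRootMinpolyHom K z)

theorem exists_pow_eq_pow_natDegree_minpoly {z : A} {m : ℕ} {c : K}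
    (h : z ^ m = algebraMap K A c) : ∃ N : K, N ^ m = c ^ (minpoly K z).natDegree := by
  have hroot : AdjoinRoot.root (minpoly K z) ^ m = algebraMap K _ c :=
    (adjoinRootMinpolyHom K z).toRingHom.injective <| by
      simp only [AlgHom.toRingHom_eq_coe, RingHom.coe_coe, map_pow, adjoinRootMinpolyHom_root, h,
        AlgHom.commutes]
  refine ⟨Algebra.norm K (AdjoinRoot.root (minpoly K z)), ?_⟩
  rw [← map_pow, hroot, Algebra.norm_algebraMap, finrank_adjoinRoot_minpoly]

theorem exists_eq_pow_of_pow_eq_algebraMap {m : ℕ} (hm : (finrank K A).Coprime m) {x : A} {c : K}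
    (h : x ^ m = algebraMap K A c) : ∃ d : K, c = d ^ m := by
  obtain ⟨N, hN⟩ := exists_pow_eq_pow_natDegree_minpoly h
  have hcop := hm.coprime_dvd_left (natDegree_minpoly_dvd_finrank K x)
  obtain ⟨d, hd, -⟩ := (pow_eq_pow_iff_of_coprime hcop).mp hN.symm
  exact ⟨d, hd⟩

end DivisionAlgebra

section RationalDivisionAlgebra

variable {A : Type*} [DivisionRing A] [Algebra ℚ A] [FiniteDimensional ℚ A]

theorem eq_one_of_pow_prime_eq_one {p : ℕ} (hp : p.Prime)
    (hp_sub_one_dvd : ¬(p - 1) ∣ finrank ℚ A) {y : A} (hy : y ^ p = 1) : y = 1 := by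
  have := Fact.mk hp
  have hfactor : aeval y (cyclotomic p ℚ) * (y - 1) = 0 := by
    simpa [hy] using congrArg (aeval y) (cyclotomic_prime_mul_X_sub_one ℚ p)
  rcases mul_eq_zero.mp hfactor with hcyc | hy1
  · have hmin := minpoly.eq_of_irreducible_of_monic (cyclotomic.irreducible_rat hp.pos) hcyc
      (cyclotomic.monic p ℚ)
    refine absurd ?_ hp_sub_one_dvd
    rw [← Nat.totient_prime hp, ← natDegree_cyclotomic p ℚ, hmin]
    exact natDegree_minpoly_dvd_finrank ℚ y
  · exact sub_eq_zero.mp hy1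

theorem mem_range_algebraMap_of_pow_mem_range {p : ℕ} (hp : p.Prime)
    (hp_dvd : ¬p ∣ finrank ℚ A) (hp_sub_one_dvd : ¬(p - 1) ∣ finrank ℚ A) {x : A}
    (hx : x ^ p ∈ Set.range (algebraMap ℚ A)) : x ∈ Set.range (algebraMap ℚ A) := by
  obtain ⟨c, hc⟩ := hx
  obtain ⟨d, rfl⟩ :=
    exists_eq_pow_of_pow_eq_algebraMap (hp.coprime_iff_not_dvd.mpr hp_dvd).symm hc.symm
  rcases eq_or_ne d 0 with rfl | hd
  · have hx0 : x = 0 := (pow_eq_zero_iff hp.ne_zero).mp (by simpa [hp.ne_zero] using hc.symm)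
    exact ⟨0, by rw [hx0, map_zero]⟩
  have hy : (x * algebraMap ℚ A d⁻¹) ^ p = 1 := by
    rw [(Algebra.commute_algebraMap_right _ x).mul_pow, ← hc, ← map_pow, ← map_mul, ← mul_pow,
      mul_inv_cancel₀ hd, one_pow, map_one]
  refine ⟨d, ?_⟩
  rw [eq_inv_of_mul_eq_one_left (eq_one_of_pow_prime_eq_one hp hp_sub_one_dvd hy), map_inv₀,
    inv_inv]

end RationalDivisionAlgebra

theorem stmt_12_general (A : Type) [DivisionRing A] [Algebra ℚ A]
    (hrank : Module.finrank ℚ A = 9)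
    (p : ℕ) (hp : p.Prime) (hp5 : 5 ≤ p)
    (x : A) (hxp : x ^ p ∈ Set.range (algebraMap ℚ A)) :
    x ∈ Set.range (algebraMap ℚ A) := by
  have : FiniteDimensional ℚ A := Module.finite_of_finrank_pos (by omega)
  refine mem_range_algebraMap_of_pow_mem_range hp (fun h => ?_) (fun h => ?_) hxp
  · have h3 : p ∣ 3 ^ 2 := by rwa [hrank] at h
    have := (Nat.prime_dvd_prime_iff_eq hp Nat.prime_three).mp (hp.dvd_of_dvd_pow h3)
    omega
  · have h2 : 2 ∣ p - 1 := by have := hp.eq_two_or_odd; omega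
    exact absurd (h2.trans (hrank ▸ h)) (by norm_num)

/-- Let `A` be a central division algebra of dimension `9` over `ℚ` and let `p ≥ 5` be a
prime number. Then every nonzero element `x ∈ A` with `x^p` lying in the image of the
structure map `ℚ → A` itself lies in the image of `ℚ → A`. (Equivalently, the group `Aˣ/ℚˣ`,
i.e. the automorphism group of the non-trivial Severi–Brauer surface corresponding to `A`,
contains no element of prime order `p ≥ 5`.) -/
theorem stmt_12 (A : Type) [DivisionRing A] [Algebra ℚ A]
    (hcenter : Subalgebra.center ℚ A = ⊥) (hrank : Module.finrank ℚ A = 9)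
    (p : ℕ) (hp : p.Prime) (hp5 : 5 ≤ p)
    (x : A) (hx : x ≠ 0) (hxp : x ^ p ∈ Set.range (algebraMap ℚ A)) :
    x ∈ Set.range (algebraMap ℚ A) :=
  stmt_12_general A hrank p hp hp5 x hxp
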